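/- For smooth vector fields u and smooth positive ρ on the torus satisfying the continuity equation, the following two integration-by-parts identities hold: (i) −∫ u·∇div(ρu) dx − ∫ (u·∇u)·∇ρ dx = ∫ ρ ∇u : ∇ᵗu dx; (ii) −∫ ∇div u · ∇ρ dx − ∫ D(u) : ∇∇ρ dx = 0, where D(u) = (∇u+∇ᵗu)/2 and ∇∇ρ is the Hessian of ρ. -/

import Mathlib

open MeasureTheory Real Filter

noncomputable section

/-- Partial derivative in direction `i` of a scalar field on `ℝ^d`. -/
def pd {d : ℕ} (i : Fin d) (f : (Fin d → ℝ) → ℝ) (x : Fin d → ℝ) : ℝ :=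
  fderiv ℝ f x (Pi.single i 1)

/-- Laplacian of a scalar field on `ℝ^d`. -/
def lap {d : ℕ} (f : (Fin d → ℝ) → ℝ) (x : Fin d → ℝ) : ℝ :=
  ∑ i, pd i (pd i f) x

/-- Fundamental domain of the torus `𝕋^d = ℝ^d / ℤ^d`. -/
def box (d : ℕ) : Set (Fin d → ℝ) := Set.univ.pi fun _ => Set.Icc 0 1

namespace IBPHelp

variable {d : ℕ}

lemma box_eq : box d = Set.Icc (0 : Fin d → ℝ) 1 := by
  rw [box, ← Set.pi_univ_Icc]; rfl

/-- Smooth and `ℤ^d`-periodic. -/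
def SP (f : (Fin d → ℝ) → ℝ) : Prop :=
  ContDiff ℝ (⊤ : ℕ∞) f ∧ ∀ x k, f (x + Pi.single k 1) = f x

lemma SP.cd {f : (Fin d → ℝ) → ℝ} (h : SP f) : ContDiff ℝ (⊤ : ℕ∞) f := h.1
lemma SP.cont {f : (Fin d → ℝ) → ℝ} (h : SP f) : Continuous f := h.1.continuous

lemma contDiff_pd {f : (Fin d → ℝ) → ℝ} (hf : ContDiff ℝ (⊤ : ℕ∞) f) (i : Fin d) :
    ContDiff ℝ (⊤ : ℕ∞) (pd i f) := by
  have := (ContinuousLinearMap.apply ℝ ℝ (Pi.single i 1)).contDiff.comp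
    (hf.fderiv_right (m := (⊤ : ℕ∞)) (by simp))
  exact this

lemma pd_mul {f g : (Fin d → ℝ) → ℝ} (hf : ContDiff ℝ (⊤ : ℕ∞) f) (hg : ContDiff ℝ (⊤ : ℕ∞) g)
    (i : Fin d) (x : Fin d → ℝ) :
    pd i (fun y => f y * g y) x = pd i f x * g x + f x * pd i g x := by
  simp only [pd, fderiv_fun_mul (hf.differentiable (by simp)).differentiableAt
    (hg.differentiable (by simp)).differentiableAt]
  simp; ring

lemma pd_sum {ι : Type*} (s : Finset ι) (f : ι → (Fin d → ℝ) → ℝ)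
    (hf : ∀ j, ContDiff ℝ (⊤ : ℕ∞) (f j)) (i : Fin d) (x : Fin d → ℝ) :
    pd i (fun y => ∑ j ∈ s, f j y) x = ∑ j ∈ s, pd i (f j) x := by
  simp only [pd]
  rw [fderiv_fun_sum (fun j _ => ((hf j).differentiable (by simp)).differentiableAt)]
  simp

lemma fderiv_translate {f : (Fin d → ℝ) → ℝ} (hf : Differentiable ℝ f)
    (c x : Fin d → ℝ) : fderiv ℝ (fun y => f (y + c)) x = fderiv ℝ f (x + c) := by
  have h : HasFDerivAt (fun y => f (y + c)) (fderiv ℝ f (x + c)) x := by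
    have := (hf (x + c)).hasFDerivAt.comp x ((hasFDerivAt_id x).add_const c)
    exact this
  exact h.fderiv

lemma SP.pd {f : (Fin d → ℝ) → ℝ} (hf : SP f) (i : Fin d) : SP (pd i f) := by
  refine ⟨contDiff_pd hf.1 i, fun x k => ?_⟩
  have h2 : (fun y => f (y + Pi.single k 1)) = f := funext fun y => hf.2 y k
  simp only [_root_.pd, ← fderiv_translate (hf.1.differentiable (by simp)) (Pi.single k 1) x, h2]

lemma SP.mul {f g : (Fin d → ℝ) → ℝ} (hf : SP f) (hg : SP g) :
    SP (fun x => f x * g x) :=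
  ⟨hf.1.mul hg.1, fun x k => by simp only []; rw [hf.2, hg.2]⟩

lemma SP.sum {ι : Type*} {s : Finset ι} {f : ι → (Fin d → ℝ) → ℝ}
    (hf : ∀ j, SP (f j)) : SP (fun x => ∑ j ∈ s, f j x) :=
  ⟨ContDiff.sum fun j _ => (hf j).1, fun x k => by
    simp only []; exact Finset.sum_congr rfl fun j _ => (hf j).2 x k⟩

lemma pd_comm {f : (Fin d → ℝ) → ℝ} (hf : ContDiff ℝ (⊤ : ℕ∞) f) (i j : Fin d) (x : Fin d → ℝ) :
    pd i (pd j f) x = pd j (pd i f) x := by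
  have hd : ∀ y, HasFDerivAt f (fderiv ℝ f y) y := fun y =>
    ((hf.differentiable (by simp)) y).hasFDerivAt
  have hd2 : HasFDerivAt (fderiv ℝ f) (fderiv ℝ (fderiv ℝ f) x) x :=
    (((hf.fderiv_right (m := (⊤ : ℕ∞)) (by simp)).differentiable (by simp)) x).hasFDerivAt
  have e2 : ∀ (v w : Fin d → ℝ), fderiv ℝ (fun y => fderiv ℝ f y v) x w
      = fderiv ℝ (fderiv ℝ f) x w v := by
    intro v w
    have : (fun y => fderiv ℝ f y v)
        = (ContinuousLinearMap.apply ℝ ℝ v) ∘ (fderiv ℝ f) := rfl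
    rw [this, fderiv_comp x (ContinuousLinearMap.apply ℝ ℝ v).differentiableAt
      (((hf.fderiv_right (m := (⊤ : ℕ∞)) (by simp)).differentiable (by simp)) x)]
    simp
  calc pd i (pd j f) x = fderiv ℝ (fderiv ℝ f) x (Pi.single i 1) (Pi.single j 1) := e2 _ _
    _ = fderiv ℝ (fderiv ℝ f) x (Pi.single j 1) (Pi.single i 1) :=
        second_derivative_symmetric hd hd2 _ _
    _ = pd j (pd i f) x := (e2 _ _).symm

lemma I_int {f : (Fin d → ℝ) → ℝ} (hf : Continuous f) : IntegrableOn f (box d) := by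
  rw [box_eq]; exact hf.continuousOn.integrableOn_compact isCompact_Icc

lemma I_congr {f g : (Fin d → ℝ) → ℝ} (h : ∀ x, f x = g x) :
    ∫ x in box d, f x = ∫ x in box d, g x := by rw [funext h]

lemma I_sum {ι : Type*} (s : Finset ι) (f : ι → (Fin d → ℝ) → ℝ)
    (hf : ∀ j, Continuous (f j)) :
    ∫ x in box d, (∑ j ∈ s, f j x) = ∑ j ∈ s, ∫ x in box d, f j x :=
  integral_finset_sum s fun j _ => I_int (hf j)

lemma integral_pd_zero {f : (Fin d → ℝ) → ℝ} (hf : SP f) (i : Fin d) :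
    ∫ x in box d, pd i f x = 0 := by
  rw [box_eq]
  cases d with
  | zero => exact i.elim0
  | succ n =>
    obtain ⟨hcd, hper⟩ := hf
    have hdf := (hcd.differentiable (by simp))
    have key := MeasureTheory.integral_divergence_of_hasFDerivAt_off_countable'
      (0 : Fin (n+1) → ℝ) 1 (zero_le_one)
      (fun j => if j = i then f else fun _ => 0)
      (fun j x => if j = i then fderiv ℝ f x else 0)
      ∅ Set.countable_empty
      (fun j => by by_cases h : j = i <;> simp [h, hcd.continuous.continuousOn, continuousOn_const])
      (fun x _ j => by
        by_cases h : j = i <;> simp only [h, if_pos, if_neg, if_true]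
        · exact (hdf x).hasFDerivAt
        · simp [h]; exact hasFDerivAt_const 0 x)
      (by
        apply ContinuousOn.integrableOn_compact isCompact_Icc
        apply Continuous.continuousOn
        have : (fun x => ∑ j, (if j = i then fderiv ℝ f x else 0) (Pi.single j 1))
            = fun x => fderiv ℝ f x (Pi.single i 1) := by
          funext x
          rw [Finset.sum_eq_single i] <;> simp +contextual
        rw [this]
        exact (ContinuousLinearMap.apply ℝ ℝ (Pi.single i 1)).continuous.comp
          (hcd.fderiv_right (m := (⊤ : ℕ∞)) (by simp)).continuous)
    have lhs_eq : (fun x => ∑ j, (if j = i then fderiv ℝ f x else 0) (Pi.single j 1))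
        = fun x => fderiv ℝ f x (Pi.single i 1) := by
      funext x; rw [Finset.sum_eq_single i] <;> simp +contextual
    rw [lhs_eq] at key
    show ∫ x in Set.Icc (0 : Fin (n+1) → ℝ) 1, fderiv ℝ f x (Pi.single i 1) = 0
    rw [key]
    apply Finset.sum_eq_zero
    intro j _
    by_cases h : j = i
    · subst h
      have hins : ∀ y : Fin n → ℝ,
          (Fin.insertNth j ((1:Fin (n+1)→ℝ) j) y : Fin (n+1) → ℝ)
          = (Fin.insertNth j ((0:Fin (n+1)→ℝ) j) y : Fin (n+1) → ℝ) + Pi.single j 1 := by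
        intro y; funext m
        rcases eq_or_ne m j with rfl | hne
        · simp [Fin.insertNth_apply_same]
        · rcases Fin.exists_succAbove_eq hne with ⟨k, rfl⟩
          simp [Fin.insertNth_apply_succAbove, Pi.single_eq_of_ne (Fin.succAbove_ne j k)]
      simp only [if_pos rfl]
      rw [sub_eq_zero]
      apply MeasureTheory.setIntegral_congr_fun measurableSet_Icc
      intro y _
      show (if True then f else fun _ => (0:ℝ)) _ = (if True then f else fun _ => (0:ℝ)) _
      simp only [if_true]
      rw [hins y, hper]
    · simp [h]

/-- Integration by parts on the torus. -/
lemma ibp {f g : (Fin d → ℝ) → ℝ} (hf : SP f) (hg : SP g) (i : Fin d) :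
    ∫ x in box d, pd i f x * g x = -∫ x in box d, f x * pd i g x := by
  have h0 := integral_pd_zero (hf.mul hg) i
  have hexp : ∀ x, pd i (fun y => f y * g y) x = pd i f x * g x + f x * pd i g x :=
    pd_mul hf.1 hg.1 i
  rw [I_congr hexp] at h0
  rw [integral_add (I_int (((hf.pd i).cont).fun_mul hg.cont))
    (I_int (hf.cont.fun_mul ((hg.pd i).cont)))] at h0
  linarith

end IBPHelp

/-- Two integration-by-parts identities on the torus:
(i) `−∫ u·∇div(ρu) − ∫ (u·∇u)·∇ρ = ∫ ρ ∇u : ∇ᵗu`;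
(ii) `−∫ ∇div u · ∇ρ − ∫ D(u) : ∇∇ρ = 0`. -/
theorem integration_by_parts_identities {d : ℕ}
    (ρ : (Fin d → ℝ) → ℝ) (u : (Fin d → ℝ) → Fin d → ℝ)
    (hρ : ContDiff ℝ (⊤ : ℕ∞) ρ) (hu : ∀ j, ContDiff ℝ (⊤ : ℕ∞) fun x => u x j)
    (hpos : ∀ x, 0 < ρ x)
    (hper : ∀ x k, ρ (x + Pi.single k 1) = ρ x)
    (huper : ∀ x k, u (x + Pi.single k 1) = u x) :
    (-(∫ x in box d, ∑ j, u x j *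
          pd j (fun y => ∑ i, pd i (fun z => ρ z * u z i) y) x)
      - (∫ x in box d, ∑ j, (∑ i, u x i * pd i (fun y => u y j) x) * pd j ρ x)
      = ∫ x in box d, ρ x * ∑ i, ∑ j,
          pd i (fun y => u y j) x * pd j (fun y => u y i) x) ∧
    (-(∫ x in box d, ∑ i,
          pd i (fun y => ∑ j, pd j (fun z => u z j) y) x * pd i ρ x)
      - (∫ x in box d, ∑ i, ∑ j,
          ((pd i (fun y => u y j) x + pd j (fun y => u y i) x) / 2)
            * pd i (pd j ρ) x) = 0) := by
  open IBPHelp in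
  have hUS : ∀ j, SP (fun y => u y j) := fun j =>
    ⟨hu j, fun x k => by simp only []; rw [huper]⟩
  have hρS : SP ρ := ⟨hρ, hper⟩
  have cU : ∀ j, Continuous fun y => u y j := fun j => (hUS j).cont
  have cpd : ∀ (i j : Fin d), Continuous (pd i (fun y => u y j)) :=
    fun i j => ((hUS j).pd i).cont
  have cρ := hρS.cont
  have cpdρ : ∀ i, Continuous (pd i ρ) := fun i => (hρS.pd i).cont
  constructor
  · -- part (i)
    have hqS : SP (fun y => ∑ i, pd i (fun z => ρ z * u z i) y) :=
      SP.sum (fun i => (hρS.mul (hUS i)).pd i)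
    have cq : Continuous (fun y => ∑ i, pd i (fun z => ρ z * u z i) y) := hqS.cont
    -- per-pair integrals
    -- a i j = ∫ u_i ∂_iρ ∂_j u_j ; b i j = ∫ u_i ∂_jρ ∂_i u_j
    -- c i j = ∫ ρ ∂_i u_i ∂_j u_j ; e i j = ∫ ρ ∂_i u_j ∂_j u_i
    -- key IBP expansions
    have keyc : ∀ i j : Fin d,
        (∫ x in box d, ρ x * pd i (fun y => u y i) x * pd j (fun y => u y j) x)
        = -∫ x in box d, u x i *
            (pd i ρ x * pd j (fun y => u y j) x + ρ x * pd i (pd j (fun y => u y j)) x) := by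
      intro i j
      have h := ibp (hUS i) (hρS.mul ((hUS j).pd j)) i
      have h' : (∫ x in box d, pd i (fun y => u y i) x * (ρ x * pd j (fun y => u y j) x))
          = -∫ x in box d, u x i *
              pd i (fun y => ρ y * pd j (fun z => u z j) y) x := h
      calc (∫ x in box d, ρ x * pd i (fun y => u y i) x * pd j (fun y => u y j) x)
          = ∫ x in box d, pd i (fun y => u y i) x * (ρ x * pd j (fun y => u y j) x) :=
            I_congr fun x => by ring
        _ = -∫ x in box d, u x i * pd i (fun y => ρ y * pd j (fun z => u z j) y) x := h'
        _ = -∫ x in box d, u x i *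
              (pd i ρ x * pd j (fun y => u y j) x + ρ x * pd i (pd j (fun y => u y j)) x) := by
            rw [neg_inj]
            refine I_congr fun x => ?_
            have : pd i (fun y => ρ y * pd j (fun z => u z j) y) x
                = pd i ρ x * pd j (fun y => u y j) x + ρ x * pd i (pd j (fun y => u y j)) x :=
              pd_mul hρ (contDiff_pd (hu j) j) i x
            rw [this]
    have keye : ∀ i j : Fin d,
        (∫ x in box d, ρ x * pd i (fun y => u y j) x * pd j (fun y => u y i) x)
        = -∫ x in box d, u x i *
            (pd j ρ x * pd i (fun y => u y j) x + ρ x * pd j (pd i (fun y => u y j)) x) := by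
      intro i j
      have h' : (∫ x in box d, pd j (fun y => u y i) x * (ρ x * pd i (fun y => u y j) x))
          = -∫ x in box d, u x i *
              pd j (fun y => ρ y * pd i (fun z => u z j) y) x :=
        ibp (hUS i) (hρS.mul ((hUS j).pd i)) j
      calc (∫ x in box d, ρ x * pd i (fun y => u y j) x * pd j (fun y => u y i) x)
          = ∫ x in box d, pd j (fun y => u y i) x * (ρ x * pd i (fun y => u y j) x) :=
            I_congr fun x => by ring
        _ = -∫ x in box d, u x i * pd j (fun y => ρ y * pd i (fun z => u z j) y) x := h'
        _ = -∫ x in box d, u x i *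
              (pd j ρ x * pd i (fun y => u y j) x + ρ x * pd j (pd i (fun y => u y j)) x) := by
            rw [neg_inj]
            refine I_congr fun x => ?_
            have : pd j (fun y => ρ y * pd i (fun z => u z j) y) x
                = pd j ρ x * pd i (fun y => u y j) x + ρ x * pd j (pd i (fun y => u y j)) x :=
              pd_mul hρ (contDiff_pd (hu j) i) j x
            rw [this]
    -- c - e = b - a per pair
    have key : ∀ i j : Fin d,
        (∫ x in box d, ρ x * pd i (fun y => u y i) x * pd j (fun y => u y j) x)
        - (∫ x in box d, ρ x * pd i (fun y => u y j) x * pd j (fun y => u y i) x)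
        = (∫ x in box d, u x i * pd j ρ x * pd i (fun y => u y j) x)
        - (∫ x in box d, u x i * pd i ρ x * pd j (fun y => u y j) x) := by
      intro i j
      rw [keyc i j, keye i j]
      have hint1 : IntegrableOn (fun x => u x i * (pd i ρ x * pd j (fun y => u y j) x)) (box d) :=
        I_int ((cU i).mul ((cpdρ i).mul (cpd j j)))
      have hint2 : IntegrableOn (fun x => u x i * (ρ x * pd i (pd j (fun y => u y j)) x)) (box d) :=
        I_int ((cU i).mul (cρ.mul (((hUS j).pd j |>.pd i).cont)))
      have hint3 : IntegrableOn (fun x => u x i * (pd j ρ x * pd i (fun y => u y j) x)) (box d) :=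
        I_int ((cU i).mul ((cpdρ j).mul (cpd i j)))
      have hint4 : IntegrableOn (fun x => u x i * (ρ x * pd j (pd i (fun y => u y j)) x)) (box d) :=
        I_int ((cU i).mul (cρ.mul (((hUS j).pd i |>.pd j).cont)))
      have e1 : (∫ x in box d, u x i *
            (pd i ρ x * pd j (fun y => u y j) x + ρ x * pd i (pd j (fun y => u y j)) x))
          = (∫ x in box d, u x i * (pd i ρ x * pd j (fun y => u y j) x))
            + ∫ x in box d, u x i * (ρ x * pd i (pd j (fun y => u y j)) x) := by
        rw [← integral_add hint1 hint2]
        exact I_congr fun x => by ring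
      have e2 : (∫ x in box d, u x i *
            (pd j ρ x * pd i (fun y => u y j) x + ρ x * pd j (pd i (fun y => u y j)) x))
          = (∫ x in box d, u x i * (pd j ρ x * pd i (fun y => u y j) x))
            + ∫ x in box d, u x i * (ρ x * pd j (pd i (fun y => u y j)) x) := by
        rw [← integral_add hint3 hint4]
        exact I_congr fun x => by ring
      rw [e1, e2]
      have e3 : (∫ x in box d, u x i * (ρ x * pd i (pd j (fun y => u y j)) x))
          = ∫ x in box d, u x i * (ρ x * pd j (pd i (fun y => u y j)) x) :=
        I_congr fun x => by rw [pd_comm (hu j) i j x]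
      have e4 : (∫ x in box d, u x i * (pd i ρ x * pd j (fun y => u y j) x))
          = ∫ x in box d, u x i * pd i ρ x * pd j (fun y => u y j) x :=
        I_congr fun x => by ring
      have e5 : (∫ x in box d, u x i * (pd j ρ x * pd i (fun y => u y j) x))
          = ∫ x in box d, u x i * pd j ρ x * pd i (fun y => u y j) x :=
        I_congr fun x => by ring
      rw [e3, e4, e5]; ring
    -- expand the first LHS term
    have hA : ∀ j : Fin d, (∫ x in box d, u x j *
          pd j (fun y => ∑ i, pd i (fun z => ρ z * u z i) y) x)
        = -∑ i, ((∫ x in box d, u x i * pd i ρ x * pd j (fun y => u y j) x)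
          + ∫ x in box d, ρ x * pd i (fun y => u y i) x * pd j (fun y => u y j) x) := by
      intro j
      have step1 : (∫ x in box d, u x j *
            pd j (fun y => ∑ i, pd i (fun z => ρ z * u z i) y) x)
          = -∫ x in box d, (∑ i, pd i (fun z => ρ z * u z i) x) * pd j (fun y => u y j) x :=
        (I_congr fun x => mul_comm _ _).trans (ibp hqS (hUS j) j)
      rw [step1, neg_inj]
      have step2 : (∫ x in box d, (∑ i, pd i (fun z => ρ z * u z i) x) * pd j (fun y => u y j) x)
          = ∫ x in box d, ∑ i, (u x i * pd i ρ x * pd j (fun y => u y j) x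
              + ρ x * pd i (fun y => u y i) x * pd j (fun y => u y j) x) := by
        refine I_congr fun x => ?_
        rw [Finset.sum_mul]
        refine Finset.sum_congr rfl fun i _ => ?_
        have : pd i (fun z => ρ z * u z i) x
            = pd i ρ x * u x i + ρ x * pd i (fun y => u y i) x :=
          pd_mul hρ (hu i) i x
        rw [this]; ring
      rw [step2, I_sum _ _ (fun i =>
        ((((cU i).fun_mul (cpdρ i)).fun_mul (cpd j j)).fun_add ((cρ.fun_mul (cpd i i)).fun_mul (cpd j j))))]
      exact Finset.sum_congr rfl fun i _ => integral_add
        (I_int (((cU i).mul (cpdρ i)).mul (cpd j j)))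
        (I_int ((cρ.mul (cpd i i)).mul (cpd j j)))
    have hA' : (∫ x in box d, ∑ j, u x j *
          pd j (fun y => ∑ i, pd i (fun z => ρ z * u z i) y) x)
        = ∑ j, (∫ x in box d, u x j *
          pd j (fun y => ∑ i, pd i (fun z => ρ z * u z i) y) x) :=
      I_sum _ _ (fun j => (cU j).mul ((hqS.pd j).cont))
    have hB : (∫ x in box d, ∑ j, (∑ i, u x i * pd i (fun y => u y j) x) * pd j ρ x)
        = ∑ j, ∑ i, ∫ x in box d, u x i * pd j ρ x * pd i (fun y => u y j) x := by
      rw [I_sum _ _ (fun j => (continuous_finset_sum _ fun i _ =>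
        (cU i).fun_mul (cpd i j)).fun_mul (cpdρ j))]
      refine Finset.sum_congr rfl fun j _ => ?_
      have step : (∫ x in box d, (∑ i, u x i * pd i (fun y => u y j) x) * pd j ρ x)
          = ∫ x in box d, ∑ i, u x i * pd j ρ x * pd i (fun y => u y j) x := by
        refine I_congr fun x => ?_
        rw [Finset.sum_mul]
        exact Finset.sum_congr rfl fun i _ => by ring
      rw [step, I_sum _ _ (fun i => ((cU i).fun_mul (cpdρ j)).fun_mul (cpd i j))]
    have hC : (∫ x in box d, ρ x * ∑ i, ∑ j,
          pd i (fun y => u y j) x * pd j (fun y => u y i) x)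
        = ∑ i, ∑ j, ∫ x in box d, ρ x * pd i (fun y => u y j) x * pd j (fun y => u y i) x := by
      have step : (∫ x in box d, ρ x * ∑ i, ∑ j,
            pd i (fun y => u y j) x * pd j (fun y => u y i) x)
          = ∫ x in box d, ∑ i, ∑ j,
            ρ x * pd i (fun y => u y j) x * pd j (fun y => u y i) x := by
        refine I_congr fun x => ?_
        rw [Finset.mul_sum]
        refine Finset.sum_congr rfl fun i _ => ?_
        rw [Finset.mul_sum]
        exact Finset.sum_congr rfl fun j _ => by ring
      rw [step, I_sum _ _ (fun i => continuous_finset_sum _ fun j _ =>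
        (cρ.fun_mul (cpd i j)).fun_mul (cpd j i))]
      exact Finset.sum_congr rfl fun i _ => I_sum _ _ (fun j => (cρ.mul (cpd i j)).mul (cpd j i))
    rw [hA', hB, hC]
    have h₁ : -(∑ j, (∫ x in box d, u x j *
          pd j (fun y => ∑ i, pd i (fun z => ρ z * u z i) y) x))
        = ∑ j : Fin d, ∑ i : Fin d,
          ((∫ x in box d, u x i * pd i ρ x * pd j (fun y => u y j) x)
          + ∫ x in box d, ρ x * pd i (fun y => u y i) x * pd j (fun y => u y j) x) := by
      rw [Finset.sum_congr rfl (fun j _ => hA j), ← Finset.sum_neg_distrib]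
      simp only [neg_neg]
    rw [h₁]
    calc (∑ j : Fin d, ∑ i : Fin d,
          ((∫ x in box d, u x i * pd i ρ x * pd j (fun y => u y j) x)
          + ∫ x in box d, ρ x * pd i (fun y => u y i) x * pd j (fun y => u y j) x))
        - ∑ j : Fin d, ∑ i : Fin d, ∫ x in box d,
            u x i * pd j ρ x * pd i (fun y => u y j) x
        = ∑ j : Fin d, ∑ i : Fin d,
          (((∫ x in box d, u x i * pd i ρ x * pd j (fun y => u y j) x)
          + ∫ x in box d, ρ x * pd i (fun y => u y i) x * pd j (fun y => u y j) x)
          - ∫ x in box d, u x i * pd j ρ x * pd i (fun y => u y j) x) := by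
          rw [← Finset.sum_sub_distrib]
          exact Finset.sum_congr rfl fun j _ => (Finset.sum_sub_distrib _ _).symm
      _ = ∑ j : Fin d, ∑ i : Fin d,
            ∫ x in box d, ρ x * pd i (fun y => u y j) x * pd j (fun y => u y i) x := by
          refine Finset.sum_congr rfl fun j _ => Finset.sum_congr rfl fun i _ => ?_
          have := key i j; linarith
      _ = ∑ i : Fin d, ∑ j : Fin d,
            ∫ x in box d, ρ x * pd i (fun y => u y j) x * pd j (fun y => u y i) x :=
          Finset.sum_comm
  · -- part (ii)
    have hdS : SP (fun y => ∑ j, pd j (fun z => u z j) y) :=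
      SP.sum (fun j => (hUS j).pd j)
    have cdd : ∀ i : Fin d, Continuous (pd i (fun y => ∑ j, pd j (fun z => u z j) y)) :=
      fun i => (hdS.pd i).cont
    have cρ2 : ∀ i j : Fin d, Continuous (pd i (pd j ρ)) :=
      fun i j => ((hρS.pd j).pd i).cont
    have cu2 : ∀ (i j k : Fin d), Continuous (pd i (pd j (fun y => u y k))) :=
      fun i j k => (((hUS k).pd j).pd i).cont
    -- the M-terms
    have hm : ∀ i j : Fin d, (∫ x in box d, pd i (fun y => u y j) x * pd i (pd j ρ) x)
        = -∫ x in box d, pd i ρ x * pd i (pd j (fun y => u y j)) x := by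
      intro i j
      calc (∫ x in box d, pd i (fun y => u y j) x * pd i (pd j ρ) x)
          = ∫ x in box d, pd j (pd i ρ) x * pd i (fun y => u y j) x :=
            I_congr fun x => by rw [pd_comm hρ i j x]; ring
        _ = -∫ x in box d, pd i ρ x * pd j (pd i (fun y => u y j)) x :=
            ibp (hρS.pd i) ((hUS j).pd i) j
        _ = -∫ x in box d, pd i ρ x * pd i (pd j (fun y => u y j)) x := by
            rw [neg_inj]
            exact I_congr fun x => by rw [pd_comm (hu j) j i x]
    -- the N-terms
    have hn : ∀ i j : Fin d, (∫ x in box d, pd j (fun y => u y i) x * pd i (pd j ρ) x)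
        = -∫ x in box d, pd j ρ x * pd j (pd i (fun y => u y i)) x := by
      intro i j
      calc (∫ x in box d, pd j (fun y => u y i) x * pd i (pd j ρ) x)
          = ∫ x in box d, pd i (pd j ρ) x * pd j (fun y => u y i) x :=
            I_congr fun x => by ring
        _ = -∫ x in box d, pd j ρ x * pd i (pd j (fun y => u y i)) x :=
            ibp (hρS.pd j) ((hUS i).pd j) i
        _ = -∫ x in box d, pd j ρ x * pd j (pd i (fun y => u y i)) x := by
            rw [neg_inj]
            exact I_congr fun x => by rw [pd_comm (hu i) i j x]
    -- summing the M-terms over j gives -s i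
    have hsm : ∀ i : Fin d,
        (∑ j : Fin d, ∫ x in box d, pd i ρ x * pd i (pd j (fun y => u y j)) x)
        = ∫ x in box d, pd i (fun y => ∑ j, pd j (fun z => u z j) y) x * pd i ρ x := by
      intro i
      rw [← I_sum _ _ (fun j => (cpdρ i).fun_mul (cu2 i j j))]
      refine I_congr fun x => ?_
      rw [← Finset.mul_sum]
      have : pd i (fun y => ∑ j, pd j (fun z => u z j) y) x
          = ∑ j, pd i (pd j (fun z => u z j)) x :=
        pd_sum Finset.univ _ (fun j => contDiff_pd (hu j) j) i x
      rw [this]; ring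
    have hsn : ∀ j : Fin d,
        (∑ i : Fin d, ∫ x in box d, pd j ρ x * pd j (pd i (fun y => u y i)) x)
        = ∫ x in box d, pd j (fun y => ∑ i, pd i (fun z => u z i) y) x * pd j ρ x := by
      intro j
      rw [← I_sum _ _ (fun i => (cpdρ j).fun_mul (cu2 j i i))]
      refine I_congr fun x => ?_
      rw [← Finset.mul_sum]
      have : pd j (fun y => ∑ i, pd i (fun z => u z i) y) x
          = ∑ i, pd j (pd i (fun z => u z i)) x :=
        pd_sum Finset.univ _ (fun i => contDiff_pd (hu i) i) j x
      rw [this]; ring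
    -- split the first integral
    have h4 : (∫ x in box d, ∑ i,
          pd i (fun y => ∑ j, pd j (fun z => u z j) y) x * pd i ρ x)
        = ∑ i : Fin d, ∫ x in box d,
          pd i (fun y => ∑ j, pd j (fun z => u z j) y) x * pd i ρ x :=
      I_sum _ _ (fun i => (cdd i).mul (cpdρ i))
    -- split the second integral
    have h5 : (∫ x in box d, ∑ i, ∑ j,
          ((pd i (fun y => u y j) x + pd j (fun y => u y i) x) / 2) * pd i (pd j ρ) x)
        = ∑ i : Fin d, ∑ j : Fin d,
          ((∫ x in box d, pd i (fun y => u y j) x * pd i (pd j ρ) x)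
            + ∫ x in box d, pd j (fun y => u y i) x * pd i (pd j ρ) x) / 2 := by
      rw [I_sum _ _ (fun i => continuous_finset_sum _ fun j _ =>
        (((cpd i j).fun_add (cpd j i)).div_const 2).fun_mul (cρ2 i j))]
      refine Finset.sum_congr rfl fun i _ => ?_
      rw [I_sum _ _ (fun j => (((cpd i j).fun_add (cpd j i)).div_const 2).fun_mul (cρ2 i j))]
      refine Finset.sum_congr rfl fun j _ => ?_
      rw [← integral_add (I_int ((cpd i j).fun_mul (cρ2 i j))) (I_int ((cpd j i).fun_mul (cρ2 i j))),
        ← MeasureTheory.integral_div]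
      exact I_congr fun x => by ring
    rw [h4, h5]
    -- now pure sum algebra
    have hM : ∀ i : Fin d, (∑ j : Fin d,
          ∫ x in box d, pd i (fun y => u y j) x * pd i (pd j ρ) x)
        = -∫ x in box d, pd i (fun y => ∑ j, pd j (fun z => u z j) y) x * pd i ρ x := by
      intro i
      rw [Finset.sum_congr rfl (fun j _ => hm i j), Finset.sum_neg_distrib, hsm i]
    have hN : ∀ j : Fin d, (∑ i : Fin d,
          ∫ x in box d, pd j (fun y => u y i) x * pd i (pd j ρ) x)
        = -∫ x in box d, pd j (fun y => ∑ i, pd i (fun z => u z i) y) x * pd j ρ x := by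
      intro j
      rw [Finset.sum_congr rfl (fun i _ => hn i j), Finset.sum_neg_distrib, hsn j]
    have split : (∑ i : Fin d, ∑ j : Fin d,
          ((∫ x in box d, pd i (fun y => u y j) x * pd i (pd j ρ) x)
            + ∫ x in box d, pd j (fun y => u y i) x * pd i (pd j ρ) x) / 2)
        = ((∑ i : Fin d, ∑ j : Fin d,
            ∫ x in box d, pd i (fun y => u y j) x * pd i (pd j ρ) x)
          + ∑ i : Fin d, ∑ j : Fin d,
            ∫ x in box d, pd j (fun y => u y i) x * pd i (pd j ρ) x) / 2 := by
      rw [← Finset.sum_add_distrib, Finset.sum_div]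
      refine Finset.sum_congr rfl fun i _ => ?_
      rw [← Finset.sum_add_distrib, Finset.sum_div]
    rw [split]
    have hMM : (∑ i : Fin d, ∑ j : Fin d,
          ∫ x in box d, pd i (fun y => u y j) x * pd i (pd j ρ) x)
        = -∑ i : Fin d, ∫ x in box d,
            pd i (fun y => ∑ j, pd j (fun z => u z j) y) x * pd i ρ x := by
      rw [Finset.sum_congr rfl (fun i _ => hM i), ← Finset.sum_neg_distrib]
    have hNN : (∑ i : Fin d, ∑ j : Fin d,
          ∫ x in box d, pd j (fun y => u y i) x * pd i (pd j ρ) x)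
        = -∑ j : Fin d, ∫ x in box d,
            pd j (fun y => ∑ i, pd i (fun z => u z i) y) x * pd j ρ x := by
      rw [Finset.sum_comm, Finset.sum_congr rfl (fun j _ => hN j), ← Finset.sum_neg_distrib]
    rw [hMM, hNN]
    ring
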